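/- Let $k$ be a field of characteristic $p > 0$, $e \ge 1$, and let $S$ be a domain over $k$ with $p^e$-basis monomials in $x_1,\ldots,x_n,t_1,\ldots,t_r$. Fix $g \in S$ with expansion coefficients $\xi_{I,J} \in S$ (so $g = \sum \xi_{I,J}^{p^e} x^I t^J$). Define for each multi-index $I$ the polynomial $\eta_{I,0}(z_1,\ldots,z_r) = \sum_{0 \le j_\beta < p^e} \xi_{I,J}^{p^e} z_1^{j_1}\cdots z_r^{j_r} \in S[z_1,\ldots,z_r]$. Then for every $b = (b_1,\ldots,b_r) \in (k^{p^e})^r$, one has $\eta_{I,0}(b_1,\ldots,b_r) = \xi_{I,0}(b)^{p^e}$, where $\xi_{I,0}(b)$ is the $(I,0)$-coefficient of $g$ in the translated $p^e$-basis $\{x^I (t-b)^J\}$. -/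
import Mathlib


lemma sum_fin_choose_pow {S : Type*} [CommRing S] (q j : ℕ) (hj : j < q) (a b : S) :
    ∑ m : Fin q, (Nat.choose j (m : ℕ) : S) * b ^ (j - (m : ℕ)) * a ^ (m : ℕ)
      = (a + b) ^ j := by
  rw [Fin.sum_univ_eq_sum_range (fun m => (Nat.choose j m : S) * b ^ (j - m) * a ^ m) q]
  have hsub : ∑ m ∈ Finset.range q, (j.choose m : S) * b ^ (j - m) * a ^ m
      = ∑ m ∈ Finset.range (j + 1), (j.choose m : S) * b ^ (j - m) * a ^ m := by
    symm
    apply Finset.sum_subset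
    · intro m hm
      simp only [Finset.mem_range] at *
      omega
    · intro m _ hm
      simp only [Finset.mem_range, not_lt] at hm
      have : j < m := by omega
      simp [Nat.choose_eq_zero_of_lt this]
  rw [hsub, add_pow]
  apply Finset.sum_congr rfl
  intro m _
  ring


/-- The monomials `x^I · u^J` (exponents `< q`) form a `q`-basis of `S`. -/
def IsMonomialPeBasis (S : Type*) [CommRing S] (q n r : ℕ)
    (x : Fin n → S) (u : Fin r → S) : Prop :=
  ∀ g : S, ∃! c : (Fin n → Fin q) → (Fin r → Fin q) → S,
    g = ∑ I : Fin n → Fin q, ∑ J : Fin r → Fin q,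
      (c I J) ^ q * (∏ a, x a ^ (I a : ℕ)) * ∏ b, u b ^ (J b : ℕ)

/-- Proposition 3.5, key identity: with `q = p^e`, the polynomial
`η_{I,0}(z) = ∑_J ξ_{I,J}^q z^J ∈ S[z₁,…,z_r]` evaluated at any `b ∈ (k^{p^e})^r` equals
`ξ_{I,0}(b)^q`, where `ξ_{I,J}(b)` are the coefficients of `g` in the translated
`p^e`-basis `{x^I (t - b)^J}`. -/
theorem eta_eval_eq_xi_pow {k : Type*} [Field k] {p : ℕ} (hp : p.Prime) [CharP k p]
    {S : Type*} [CommRing S] [IsDomain S] [Algebra k S] [CharP S p]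
    {e : ℕ} (he : 1 ≤ e) {n r : ℕ} (x : Fin n → S) (t : Fin r → S)
    (β : Fin r → k) (hβ : ∀ i, ∃ c : k, c ^ p ^ e = β i)
    (hbasis0 : IsMonomialPeBasis S (p ^ e) n r x t)
    (hbasisb : IsMonomialPeBasis S (p ^ e) n r x
      (fun i => t i - algebraMap k S (β i)))
    (g : S) (ξ ξb : (Fin n → Fin (p ^ e)) → (Fin r → Fin (p ^ e)) → S)
    (hξ : g = ∑ I : Fin n → Fin (p ^ e), ∑ J : Fin r → Fin (p ^ e),
      (ξ I J) ^ p ^ e * (∏ a, x a ^ (I a : ℕ)) * ∏ b, t b ^ (J b : ℕ))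
    (hξb : g = ∑ I : Fin n → Fin (p ^ e), ∑ J : Fin r → Fin (p ^ e),
      (ξb I J) ^ p ^ e * (∏ a, x a ^ (I a : ℕ)) *
        ∏ b, (t b - algebraMap k S (β b)) ^ (J b : ℕ)) :
    ∀ (I : Fin n → Fin (p ^ e)) (J0 : Fin r → Fin (p ^ e)), (∀ i, (J0 i : ℕ) = 0) →
      MvPolynomial.eval (fun i => algebraMap k S (β i))
        (∑ J : Fin r → Fin (p ^ e),
          MvPolynomial.C ((ξ I J) ^ p ^ e) *
            ∏ i, (MvPolynomial.X i : MvPolynomial (Fin r) S) ^ (J i : ℕ)) =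
      (ξb I J0) ^ p ^ e := by
  classical
  intro I J0 hJ0
  haveI := Fact.mk hp
  choose c hc using hβ
  have hF : ∀ s : S, iterateFrobenius S p e s = s ^ p ^ e :=
    fun s => iterateFrobenius_def p e s
  set ξb' : (Fin n → Fin (p ^ e)) → (Fin r → Fin (p ^ e)) → S := fun I' M =>
    ∑ J : Fin r → Fin (p ^ e),
      (∏ i, (Nat.choose (J i : ℕ) (M i : ℕ) : S) *
        (algebraMap k S (c i)) ^ ((J i : ℕ) - (M i : ℕ))) * ξ I' J with hξb'def
  -- q-th power of the candidate coefficients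
  have hpow : ∀ (I' : Fin n → Fin (p ^ e)) (M : Fin r → Fin (p ^ e)),
      (ξb' I' M) ^ p ^ e = ∑ J : Fin r → Fin (p ^ e),
        (∏ i, (Nat.choose (J i : ℕ) (M i : ℕ) : S) *
          (algebraMap k S (β i)) ^ ((J i : ℕ) - (M i : ℕ))) * (ξ I' J) ^ p ^ e := by
    intro I' M
    rw [← hF, hξb'def]
    simp only
    rw [map_sum]
    apply Finset.sum_congr rfl
    intro J _
    rw [map_mul, map_prod, hF (ξ I' J)]
    congr 1
    apply Finset.prod_congr rfl
    intro i _
    rw [map_mul, map_natCast, map_pow, hF, ← map_pow (algebraMap k S), hc]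
  -- inner binomial identity
  have inner : ∀ J : Fin r → Fin (p ^ e),
      ∏ b, t b ^ (J b : ℕ) =
      ∑ M : Fin r → Fin (p ^ e), ∏ i,
        ((Nat.choose (J i : ℕ) (M i : ℕ) : S) *
          (algebraMap k S (β i)) ^ ((J i : ℕ) - (M i : ℕ)) *
          (t i - algebraMap k S (β i)) ^ (M i : ℕ)) := by
    intro J
    have h1 : ∏ i, (∑ m : Fin (p ^ e),
        (Nat.choose (J i : ℕ) (m : ℕ) : S) *
          (algebraMap k S (β i)) ^ ((J i : ℕ) - (m : ℕ)) *
          (t i - algebraMap k S (β i)) ^ (m : ℕ))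
        = ∑ M ∈ Fintype.piFinset (fun _ : Fin r => (Finset.univ : Finset (Fin (p ^ e)))),
            ∏ i, (Nat.choose (J i : ℕ) (M i : ℕ) : S) *
              (algebraMap k S (β i)) ^ ((J i : ℕ) - (M i : ℕ)) *
              (t i - algebraMap k S (β i)) ^ (M i : ℕ) :=
      Finset.prod_univ_sum _ _
    rw [Fintype.piFinset_univ] at h1
    rw [← h1]
    apply Finset.prod_congr rfl
    intro i _
    have h := sum_fin_choose_pow (p ^ e) (J i : ℕ) (J i).isLt
      (t i - algebraMap k S (β i)) (algebraMap k S (β i))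
    rw [sub_add_cancel] at h
    exact h.symm
  -- g expands with ξb' in the translated basis
  have key : g = ∑ I' : Fin n → Fin (p ^ e), ∑ M : Fin r → Fin (p ^ e),
      (ξb' I' M) ^ p ^ e * (∏ a, x a ^ (I' a : ℕ)) *
        ∏ b, (t b - algebraMap k S (β b)) ^ (M b : ℕ) := by
    rw [hξ]
    apply Finset.sum_congr rfl
    intro I' _
    simp only [hpow, Finset.sum_mul]
    rw [Finset.sum_comm]
    apply Finset.sum_congr rfl
    intro J _
    rw [inner J, Finset.mul_sum]
    apply Finset.sum_congr rfl
    intro M _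
    rw [Finset.prod_mul_distrib, Finset.prod_mul_distrib]
    ring
  -- uniqueness
  have huniq : ξb = ξb' := (hbasisb g).unique hξb key
  -- finish
  rw [huniq, hpow I J0, map_sum]
  apply Finset.sum_congr rfl
  intro J _
  rw [map_mul, MvPolynomial.eval_C, map_prod]
  simp only [map_pow, MvPolynomial.eval_X, hJ0, Nat.choose_zero_right, Nat.cast_one,
    one_mul, Nat.sub_zero]
  ring
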